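/- Let A = (a_{ij}) ∈ ℝ^{n×n} be a symmetric Z-matrix with eigenvalues λ₁ ≤ λ₂ ≤ … ≤ λₙ such that λ₁ < λ₂ and λ₂ ≥ a_{ii} for every i ∈ {1, …, n}. Then λ₂·I − A is copositive and there exists an eigenvector v¹ ∈ ℝⁿ₊ of A corresponding to the eigenvalue λ₁. -/

import Mathlib

open scoped InnerProductSpace

/-- Multiplication of an `n × n` real matrix with a vector of `EuclideanSpace ℝ (Fin n)`. -/
noncomputable def mulVecE {n : ℕ} (A : Matrix (Fin n) (Fin n) ℝ)
    (x : EuclideanSpace ℝ (Fin n)) : EuclideanSpace ℝ (Fin n) :=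
  WithLp.toLp 2 (fun i => ∑ j, A i j * x j)

lemma mulVecE_inner {n : ℕ} (A : Matrix (Fin n) (Fin n) ℝ)
    (x y : EuclideanSpace ℝ (Fin n)) :
    ⟪mulVecE A x, y⟫_ℝ = ∑ i, ∑ j, A i j * x j * y i := by
  simp [mulVecE, PiLp.inner_apply, RCLike.inner_apply, Finset.sum_mul]
  exact Finset.sum_congr rfl fun i _ => by
    rw [Finset.mul_sum]; exact Finset.sum_congr rfl fun j _ => by ring

lemma mulVecE_symm {n : ℕ} (A : Matrix (Fin n) (Fin n) ℝ) (hA : A.IsSymm)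
    (x y : EuclideanSpace ℝ (Fin n)) :
    ⟪mulVecE A x, y⟫_ℝ = ⟪x, mulVecE A y⟫_ℝ := by
  rw [mulVecE_inner, real_inner_comm, mulVecE_inner, Finset.sum_comm]
  refine Finset.sum_congr rfl fun i _ => Finset.sum_congr rfl fun j _ => ?_
  have : A j i = A i j := by rw [← hA.apply i j]
  rw [this]; ring

/-- Let `A` be a symmetric Z-matrix (`n ≥ 2`) with an orthonormal basis of eigenvectors and
corresponding eigenvalues `μ₀ ≤ μ₁ ≤ … ≤ μₙ₋₁` such that `μ₀ < μ₁` and `μ₁ ≥ Aᵢᵢ` for every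
`i`.  Then `μ₁·I - A` is copositive and there exists a nonzero eigenvector `w ∈ ℝⁿ₊` of `A`
corresponding to the smallest eigenvalue `μ₀`. -/
theorem Z_matrix_copositive_and_nonneg_eigenvector {n : ℕ} (hn : 2 ≤ n)
    (A : Matrix (Fin n) (Fin n) ℝ) (hA : A.IsSymm)
    (hZ : ∀ i j : Fin n, i ≠ j → A i j ≤ 0)
    (v : Fin n → EuclideanSpace ℝ (Fin n)) (hv : Orthonormal ℝ v)
    (μ : Fin n → ℝ) (heig : ∀ i, mulVecE A (v i) = μ i • v i) (hmono : Monotone μ)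
    (h01 : μ ⟨0, by omega⟩ < μ ⟨1, by omega⟩)
    (hdiag : ∀ i : Fin n, A i i ≤ μ ⟨1, by omega⟩) :
    (∀ x : EuclideanSpace ℝ (Fin n), (∀ i, 0 ≤ x i) →
      0 ≤ ⟪mulVecE (μ ⟨1, by omega⟩ • (1 : Matrix (Fin n) (Fin n) ℝ) - A) x, x⟫_ℝ) ∧
    ∃ w : EuclideanSpace ℝ (Fin n), w ≠ 0 ∧ (∀ i, 0 ≤ w i) ∧
      mulVecE A w = μ ⟨0, by omega⟩ • w := by
  have hne : Nonempty (Fin n) := ⟨⟨0, by omega⟩⟩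
  set i0 : Fin n := ⟨0, by omega⟩ with hi0
  set i1 : Fin n := ⟨1, by omega⟩ with hi1
  set B : Matrix (Fin n) (Fin n) ℝ := μ i1 • (1 : Matrix (Fin n) (Fin n) ℝ) - A with hB
  -- entrywise nonnegativity of B
  have hBnn : ∀ i j, 0 ≤ B i j := by
    intro i j
    by_cases h : i = j
    · subst h
      simp only [hB, Matrix.sub_apply, Matrix.smul_apply, Matrix.one_apply_eq, smul_eq_mul,
        mul_one]
      linarith [hdiag i]
    · simp only [hB, Matrix.sub_apply, Matrix.smul_apply, Matrix.one_apply_ne h, smul_eq_mul,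
        mul_zero]
      linarith [hZ i j h]
  constructor
  · intro x hx
    rw [mulVecE_inner]
    exact Finset.sum_nonneg fun i _ => Finset.sum_nonneg fun j _ =>
      mul_nonneg (mul_nonneg (hBnn i j) (hx j)) (hx i)
  · -- build the orthonormal basis
    have hcard : Fintype.card (Fin n) = Module.finrank ℝ (EuclideanSpace ℝ (Fin n)) := by
      simp [finrank_euclideanSpace_fin]
    let bb := basisOfOrthonormalOfCardEqFinrank hv hcard
    have hbb : (bb : Fin n → EuclideanSpace ℝ (Fin n)) = v :=
      coe_basisOfOrthonormalOfCardEqFinrank hv hcard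
    let b : OrthonormalBasis (Fin n) ℝ (EuclideanSpace ℝ (Fin n)) :=
      bb.toOrthonormalBasis (by rwa [hbb])
    have hb : ∀ i, b i = v i := by
      intro i
      simp only [b, Module.Basis.coe_toOrthonormalBasis, hbb]
    set v0 := v i0 with hv0
    set w : EuclideanSpace ℝ (Fin n) := WithLp.toLp 2 (fun i => |v0 i|) with hw
    have hwnn : ∀ i, 0 ≤ w i := fun i => abs_nonneg _
    have hnorm0 : ⟪v0, v0⟫_ℝ = 1 := by
      have h1 := hv.1 i0
      have := real_inner_self_eq_norm_sq (v i0)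
      rw [h1] at this
      simpa using this
    have hww : ⟪w, w⟫_ℝ = 1 := by
      rw [PiLp.inner_apply] at hnorm0 ⊢
      simp only [RCLike.inner_apply, conj_trivial] at hnorm0 ⊢
      calc ∑ i, w i * w i = ∑ i, v0 i * v0 i := by
            refine Finset.sum_congr rfl fun i _ => ?_
            simp [hw, abs_mul_abs_self]
        _ = 1 := hnorm0
    have hwne : w ≠ 0 := by
      intro h
      rw [h] at hww
      simp at hww
    -- coefficients
    set c : Fin n → ℝ := fun i => ⟪v i, w⟫_ℝ with hc
    -- ⟪Aw, w⟫ = ∑ μ i * (c i)^2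
    have hAvw : ∀ i, ⟪mulVecE A w, v i⟫_ℝ = μ i * c i := by
      intro i
      rw [mulVecE_symm A hA, heig i, real_inner_smul_right, hc, real_inner_comm]
    have hAww : ⟪mulVecE A w, w⟫_ℝ = ∑ i, μ i * c i ^ 2 := by
      rw [← b.sum_inner_mul_inner (mulVecE A w) w]
      refine Finset.sum_congr rfl fun i _ => ?_
      rw [hb i, hAvw i, hc]
      ring
    have hsumc : ∑ i, c i ^ 2 = 1 := by
      rw [← hww, ← b.sum_inner_mul_inner w w]
      refine Finset.sum_congr rfl fun i _ => ?_
      rw [hb i, hc, real_inner_comm]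
      ring
    -- ⟪Aw, w⟫ ≤ ⟪A v0, v0⟫ = μ i0
    have hAv0 : ⟪mulVecE A v0, v0⟫_ℝ = μ i0 := by
      rw [heig i0, real_inner_smul_left, hnorm0]
      simp
    have hle : ⟪mulVecE A w, w⟫_ℝ ≤ μ i0 := by
      rw [← hAv0, mulVecE_inner, mulVecE_inner]
      refine Finset.sum_le_sum fun i _ => Finset.sum_le_sum fun j _ => ?_
      by_cases h : i = j
      · subst h
        simp [hw, abs_mul_abs_self, mul_assoc, ← abs_mul]
      · have hZij := hZ i j h
        have : w j * w i = |v0 j * v0 i| := by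
          rw [hw]; simp [abs_mul]
        calc A i j * w j * w i = A i j * |v0 j * v0 i| := by rw [mul_assoc, this]
          _ ≤ A i j * (v0 j * v0 i) := by
              exact mul_le_mul_of_nonpos_left (le_abs_self _) hZij
          _ = A i j * v0 j * v0 i := by ring
    -- Rayleigh lower bound forces c i = 0 for i ≠ i0
    have hczero : ∀ i, i ≠ i0 → c i = 0 := by
      intro i hi
      have hi1le : i1 ≤ i := by
        have : (i : ℕ) ≠ 0 := fun h => hi (Fin.ext h)
        rw [Fin.le_def]
        simp only [hi1]
        omega
      have hμi : μ i0 < μ i := lt_of_lt_of_le h01 (hmono hi1le)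
      -- ∑ (μ i - μ i0) * c i ^ 2 ≤ 0, all terms nonneg
      have hkey : ∑ j, (μ j - μ i0) * c j ^ 2 ≤ 0 := by
        have : ∑ j, (μ j - μ i0) * c j ^ 2 =
            (∑ j, μ j * c j ^ 2) - μ i0 * ∑ j, c j ^ 2 := by
          rw [Finset.mul_sum, ← Finset.sum_sub_distrib]
          exact Finset.sum_congr rfl fun j _ => by ring
        rw [this, hsumc, mul_one, ← hAww]
        linarith
      have hterms : ∀ j ∈ Finset.univ, 0 ≤ (μ j - μ i0) * c j ^ 2 := by
        intro j _
        apply mul_nonneg _ (sq_nonneg _)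
        have : μ i0 ≤ μ j := hmono (by rw [Fin.le_def]; simp [hi0])
        linarith
      have hall : ∀ j ∈ Finset.univ, (μ j - μ i0) * c j ^ 2 = 0 := by
        intro j hj
        have := Finset.sum_nonneg hterms
        have hz : ∑ j, (μ j - μ i0) * c j ^ 2 = 0 := le_antisymm hkey this
        exact (Finset.sum_eq_zero_iff_of_nonneg hterms).mp hz j hj
      have := hall i (Finset.mem_univ i)
      have hpos : 0 < μ i - μ i0 := by linarith
      have hsq : c i ^ 2 = 0 := (mul_eq_zero.mp this).resolve_left (ne_of_gt hpos)
      exact pow_eq_zero_iff two_ne_zero |>.mp hsq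
    -- w = c i0 • v0
    have hwrep : w = c i0 • v0 := by
      have := b.sum_repr' w
      rw [← this]
      rw [Finset.sum_eq_single i0]
      · rw [hb i0]
      · intro j _ hj
        rw [hb j, show ⟪v j, w⟫_ℝ = 0 from hczero j hj, zero_smul]
      · exact fun h => absurd (Finset.mem_univ i0) h
    refine ⟨w, hwne, hwnn, ?_⟩
    have hlin : mulVecE A (c i0 • v0) = c i0 • mulVecE A v0 := by
      ext k
      simp [mulVecE, Finset.mul_sum]
      exact Finset.sum_congr rfl fun j _ => by ring
    rw [hwrep, hlin, heig i0, smul_comm]
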